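/- For every integer d ≥ 2, the center of Γ_d is the infinite cyclic subgroup ⟨a_d⟩, and the quotient Γ_d/⟨a_d⟩ is isomorphic to Γ_{d-1} via an isomorphism sending the images of t and a_i (for 1 ≤ i ≤ d−1) to the generators t and a_i of Γ_{d-1}. -/

import Mathlib

namespace ModelFiliform

/-- The "down-shift" endomorphism `N` of `ℤ^d`: `(N x) j = x (j-1)` for `j ≥ 1`, `(N x) 0 = 0`.
The automorphism `φ` of the model filiform group is `1 + N`. -/
def shiftMap (d : ℕ) : (Fin d → ℤ) →ₗ[ℤ] (Fin d → ℤ) where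
  toFun x := fun j =>
    if _h : 1 ≤ (j : ℕ) then x ⟨(j : ℕ) - 1, lt_of_le_of_lt (Nat.sub_le _ _) j.isLt⟩ else 0
  map_add' x y := by funext j; by_cases h : 1 ≤ (j : ℕ) <;> simp [h]
  map_smul' c x := by funext j; by_cases h : 1 ≤ (j : ℕ) <;> simp [h]

theorem shiftMap_apply (d : ℕ) (x : Fin d → ℤ) (j : Fin d) :
    shiftMap d x j =
      if _h : 1 ≤ (j : ℕ) then x ⟨(j : ℕ) - 1, lt_of_le_of_lt (Nat.sub_le _ _) j.isLt⟩ else 0 :=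
  rfl

theorem shiftMap_pow_apply (d k : ℕ) (x : Fin d → ℤ) (j : Fin d) :
    ((shiftMap d ^ k) x) j =
      if _h : k ≤ (j : ℕ) then x ⟨(j : ℕ) - k, lt_of_le_of_lt (Nat.sub_le _ _) j.isLt⟩
      else 0 := by
  induction k generalizing x with
  | zero => simp
  | succ k ih =>
      rw [pow_succ, Module.End.mul_apply, ih]
      by_cases h1 : k ≤ (j : ℕ)
      · rw [dif_pos h1, shiftMap_apply]
        by_cases h2 : k + 1 ≤ (j : ℕ)
        · rw [dif_pos (show 1 ≤ (j : ℕ) - k by omega), dif_pos h2]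
          have hab : (j : ℕ) - k - 1 = (j : ℕ) - (k + 1) := by omega
          simp only [hab]
        · rw [dif_neg (show ¬ 1 ≤ (j : ℕ) - k by omega), dif_neg h2]
      · rw [dif_neg h1, dif_neg (by omega)]

theorem shiftMap_nilpotent (d : ℕ) : IsNilpotent (shiftMap d) := by
  refine ⟨d, ?_⟩
  apply LinearMap.ext
  intro x
  funext j
  rw [shiftMap_pow_apply, dif_neg (by omega)]
  rfl

/-- `φ = 1 + N` as a unit of the endomorphism ring of `ℤ^d`. -/
noncomputable def phiUnit (d : ℕ) : (Module.End ℤ (Fin d → ℤ))ˣ :=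
  ((shiftMap_nilpotent d).isUnit_one_add).unit

/-- The automorphism `φ` of `ℤ^d`: writing `ℤ^d` multiplicatively with basis `a_1, …, a_d`
(where `a_{i+1}` is the `i`-th standard basis vector, `i : Fin d`), it fixes `a_d` and sends
`a_i ↦ a_i a_{i+1}` for `1 ≤ i < d`. -/
noncomputable def phi (d : ℕ) : (Fin d → ℤ) ≃ₗ[ℤ] (Fin d → ℤ) :=
  LinearMap.GeneralLinearGroup.generalLinearEquiv ℤ _ (phiUnit d)

/-- `φ` as a multiplicative automorphism of `Multiplicative ℤ^d`. -/
noncomputable def phiAut (d : ℕ) : MulAut (Multiplicative (Fin d → ℤ)) :=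
  AddEquiv.toMultiplicative (phi d).toAddEquiv

/-- The action of `ℤ` on `ℤ^d` defining `Γ_d = ℤ^d ⋊_φ ℤ`: the generator `t` acts by
`t x t⁻¹ = φ⁻¹(x)`, so that `t⁻¹ a_i t = φ(a_i)`, i.e. `t⁻¹ a_i t = a_i a_{i+1}` for
`1 ≤ i < d` and `t⁻¹ a_d t = a_d`. -/
noncomputable def act (d : ℕ) : Multiplicative ℤ →* MulAut (Multiplicative (Fin d → ℤ)) :=
  zpowersHom _ (phiAut d)⁻¹

/-- The discrete model filiform group `Γ_d = ℤ^d ⋊_φ ℤ`. -/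
abbrev Gamma (d : ℕ) : Type :=
  SemidirectProduct (Multiplicative (Fin d → ℤ)) (Multiplicative ℤ) (act d)

/-- The generator `t` of `Γ_d`. -/
noncomputable def tGen (d : ℕ) : Gamma d :=
  SemidirectProduct.inr (Multiplicative.ofAdd (1 : ℤ))

/-- The generators `a_1, …, a_d` of `Γ_d`: here `aGen d i` is `a_{i+1}` (as `i : Fin d` is
0-indexed), so `a_1 = aGen d ⟨0, _⟩` and `a_d = aGen d ⟨d-1, _⟩`. -/
noncomputable def aGen (d : ℕ) (i : Fin d) : Gamma d :=
  SemidirectProduct.inl (Multiplicative.ofAdd (Pi.single i (1 : ℤ)))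

/-- The standard generating set `{a_1, …, a_d, t}` of `Γ_d`. -/
noncomputable def gens (d : ℕ) : Set (Gamma d) := insert (tGen d) (Set.range (aGen d))

/-- The word length `d(1,g)` of `g ∈ Γ_d` with respect to the standard generators: the least
`n` such that `g` is a product of `n` elements of `{a_1^{±1}, …, a_d^{±1}, t^{±1}}`. -/
noncomputable def wl (d : ℕ) (g : Gamma d) : ℕ :=
  sInf {n | ∃ l : List (Gamma d), l.length = n ∧
    (∀ x ∈ l, x ∈ gens d ∨ x⁻¹ ∈ gens d) ∧ l.prod = g}

/-- The subgroup `A_d = ℤ^d ⋊ 1 = ⟨a_1, …, a_d⟩` of `Γ_d`. -/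
noncomputable def A (d : ℕ) : Subgroup (Gamma d) := Subgroup.closure (Set.range (aGen d))

theorem phiUnit_val (d : ℕ) : ((phiUnit d : Module.End ℤ (Fin d → ℤ))) = 1 + shiftMap d :=
  IsUnit.unit_spec _

theorem phiUnit_apply (d : ℕ) (x : Fin d → ℤ) :
    (phiUnit d : Module.End ℤ (Fin d → ℤ)) x = x + shiftMap d x := by
  rw [phiUnit_val]; rfl

theorem phiAut_apply (d : ℕ) (x : Multiplicative (Fin d → ℤ)) :
    phiAut d x = Multiplicative.ofAdd ((phiUnit d : Module.End ℤ (Fin d → ℤ)) x.toAdd) := rfl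

theorem phiAut_inv_apply (d : ℕ) (x : Multiplicative (Fin d → ℤ)) :
    (phiAut d)⁻¹ x = Multiplicative.ofAdd
      ((((phiUnit d)⁻¹ : (Module.End ℤ (Fin d → ℤ))ˣ) : Module.End ℤ (Fin d → ℤ)) x.toAdd) := rfl

/-- abbreviation for `φ^{-n}` as an endomorphism. -/
noncomputable def w (d : ℕ) (n : ℤ) : Module.End ℤ (Fin d → ℤ) :=
  (((phiUnit d)⁻¹ ^ n : (Module.End ℤ (Fin d → ℤ))ˣ) : Module.End ℤ (Fin d → ℤ))

theorem w_zero (d : ℕ) (x : Fin d → ℤ) : w d 0 x = x := by simp [w]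

theorem w_add_one (d : ℕ) (n : ℤ) (x : Fin d → ℤ) :
    w d (n + 1) x = (((phiUnit d)⁻¹ : (Module.End ℤ (Fin d → ℤ))ˣ) : Module.End ℤ (Fin d → ℤ))
      (w d n x) := by
  have : ((phiUnit d)⁻¹ ^ (n + 1) : (Module.End ℤ (Fin d → ℤ))ˣ)
      = (phiUnit d)⁻¹ * (phiUnit d)⁻¹ ^ n := by
    rw [← zpow_one_add]; ring_nf
  simp only [w, this, Units.val_mul, Module.End.mul_apply]

theorem w_sub_one (d : ℕ) (n : ℤ) (x : Fin d → ℤ) :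
    w d (n - 1) x = ((phiUnit d : Module.End ℤ (Fin d → ℤ))) (w d n x) := by
  have : ((phiUnit d)⁻¹ ^ (n - 1) : (Module.End ℤ (Fin d → ℤ))ˣ)
      = phiUnit d * (phiUnit d)⁻¹ ^ n := by
    rw [sub_eq_neg_add, zpow_add, zpow_neg, zpow_one, inv_inv]
  simp only [w, this, Units.val_mul, Module.End.mul_apply]

theorem phiUnit_inv_cancel (d : ℕ) (y : Fin d → ℤ) :
    (phiUnit d : Module.End ℤ (Fin d → ℤ))
      ((((phiUnit d)⁻¹ : (Module.End ℤ (Fin d → ℤ))ˣ) : Module.End ℤ (Fin d → ℤ)) y) = y := by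
  have h : (((phiUnit d * (phiUnit d)⁻¹ : (Module.End ℤ (Fin d → ℤ))ˣ))
      : Module.End ℤ (Fin d → ℤ)) y = y := by rw [mul_inv_cancel]; simp
  rw [Units.val_mul, Module.End.mul_apply] at h
  exact h

theorem phiUnit_cancel_inv (d : ℕ) (y : Fin d → ℤ) :
    (((phiUnit d)⁻¹ : (Module.End ℤ (Fin d → ℤ))ˣ) : Module.End ℤ (Fin d → ℤ))
      ((phiUnit d : Module.End ℤ (Fin d → ℤ)) y) = y := by
  have h : ((((phiUnit d)⁻¹ * phiUnit d : (Module.End ℤ (Fin d → ℤ))ˣ))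
      : Module.End ℤ (Fin d → ℤ)) y = y := by rw [inv_mul_cancel]; simp
  rw [Units.val_mul, Module.End.mul_apply] at h
  exact h

section Coords
variable {d : ℕ} (j0 j1 : Fin d) (hj0 : (j0 : ℕ) = 0) (hj1 : (j1 : ℕ) = 1)

include hj0 in
theorem shift_at_zero (y : Fin d → ℤ) : shiftMap d y j0 = 0 := by
  rw [shiftMap_apply, dif_neg]; omega

include hj0 in
theorem u_at_zero (y : Fin d → ℤ) :
    (phiUnit d : Module.End ℤ (Fin d → ℤ)) y j0 = y j0 := by
  rw [phiUnit_apply, Pi.add_apply, shift_at_zero j0 hj0, add_zero]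

include hj0 in
theorem uInv_at_zero (y : Fin d → ℤ) :
    (((phiUnit d)⁻¹ : (Module.End ℤ (Fin d → ℤ))ˣ) : Module.End ℤ (Fin d → ℤ)) y j0 = y j0 := by
  conv_rhs => rw [← phiUnit_inv_cancel d y]
  rw [u_at_zero j0 hj0]

include hj0 in
theorem w_at_zero (n : ℤ) (y : Fin d → ℤ) : w d n y j0 = y j0 := by
  induction n using Int.induction_on with
  | zero => rw [w_zero]
  | succ k ih => rw [w_add_one, uInv_at_zero j0 hj0, ih]
  | pred k ih => rw [show (-(k:ℤ) - 1) = (-k - 1) from rfl, w_sub_one, u_at_zero j0 hj0, ih]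

include hj0 hj1 in
theorem shift_at_one (y : Fin d → ℤ) : shiftMap d y j1 = y j0 := by
  rw [shiftMap_apply, dif_pos (by omega)]
  exact congrArg y (Fin.ext (by simp only [Fin.val_mk]; omega))

include hj0 hj1 in
theorem u_at_one (y : Fin d → ℤ) :
    (phiUnit d : Module.End ℤ (Fin d → ℤ)) y j1 = y j1 + y j0 := by
  rw [phiUnit_apply, Pi.add_apply, shift_at_one j0 j1 hj0 hj1]

include hj0 hj1 in
theorem uInv_at_one (y : Fin d → ℤ) :
    (((phiUnit d)⁻¹ : (Module.End ℤ (Fin d → ℤ))ˣ) : Module.End ℤ (Fin d → ℤ)) y j1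
      = y j1 - y j0 := by
  have h := u_at_one j0 j1 hj0 hj1
    ((((phiUnit d)⁻¹ : (Module.End ℤ (Fin d → ℤ))ˣ) : Module.End ℤ (Fin d → ℤ)) y)
  rw [phiUnit_inv_cancel, uInv_at_zero j0 hj0] at h
  omega

include hj0 hj1 in
theorem w_at_one (n : ℤ) (y : Fin d → ℤ) : w d n y j1 = y j1 - n * y j0 := by
  induction n using Int.induction_on with
  | zero => rw [w_zero]; ring
  | succ k ih =>
      rw [w_add_one, uInv_at_one j0 j1 hj0 hj1, ih, w_at_zero j0 hj0]; ring
  | pred k ih =>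
      rw [show (-(k:ℤ) - 1) = (-k - 1) from rfl, w_sub_one, u_at_one j0 j1 hj0 hj1, ih,
        w_at_zero j0 hj0]; ring

end Coords

theorem w_fixed {d : ℕ} {y : Fin d → ℤ} (hy : shiftMap d y = 0) (n : ℤ) : w d n y = y := by
  have hu : (phiUnit d : Module.End ℤ (Fin d → ℤ)) y = y := by
    rw [phiUnit_apply, hy, add_zero]
  have huInv : (((phiUnit d)⁻¹ : (Module.End ℤ (Fin d → ℤ))ˣ) : Module.End ℤ (Fin d → ℤ)) y
      = y := by
    rw [← hu, phiUnit_cancel_inv]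
    exact hu.symm
  induction n using Int.induction_on with
  | zero => rw [w_zero]
  | succ k ih => rw [w_add_one, ih, huInv]
  | pred k ih => rw [show (-(k:ℤ) - 1) = (-k - 1) from rfl, w_sub_one, ih, hu]

theorem act_apply (d : ℕ) (m : Multiplicative ℤ) (x : Multiplicative (Fin d → ℤ)) :
    act d m x = Multiplicative.ofAdd (w d m.toAdd x.toAdd) := by
  have key : ∀ n : ℤ, ∀ z : Multiplicative (Fin d → ℤ),
      ((phiAut d)⁻¹ ^ n) z = Multiplicative.ofAdd (w d n z.toAdd) := by
    intro n
    induction n using Int.induction_on with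
    | zero => intro z; simp [w_zero]
    | succ k ih =>
        intro z
        rw [show ((k : ℤ) + 1) = 1 + k by ring, zpow_add, zpow_one, MulAut.mul_apply, ih,
          phiAut_inv_apply, show (1 + (k:ℤ)) = k + 1 by ring, w_add_one]
        rfl
    | pred k ih =>
        intro z
        rw [show (-(k : ℤ) - 1) = -1 + -k by ring, zpow_add, MulAut.mul_apply, zpow_neg_one,
          inv_inv, ih, phiAut_apply, show (-1 + -(k:ℤ)) = -k - 1 by ring, w_sub_one]
        rfl
  rw [show act d m = (phiAut d)⁻¹ ^ m.toAdd from rfl, key]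




/-- Projection `ℤ^{k+1} → ℤ^k` onto the first `k` coordinates. -/
noncomputable def projL (k : ℕ) : (Fin (k + 1) → ℤ) →ₗ[ℤ] (Fin k → ℤ) :=
  LinearMap.funLeft ℤ ℤ Fin.castSucc

theorem projL_apply (k : ℕ) (x : Fin (k + 1) → ℤ) (j : Fin k) :
    projL k x j = x (Fin.castSucc j) := rfl

theorem projL_shift (k : ℕ) (x : Fin (k + 1) → ℤ) :
    projL k (shiftMap (k + 1) x) = shiftMap k (projL k x) := by
  funext j
  show shiftMap (k + 1) x (Fin.castSucc j) = shiftMap k (projL k x) j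
  rw [shiftMap_apply, shiftMap_apply]
  by_cases h : 1 ≤ (j : ℕ)
  · rw [dif_pos (show 1 ≤ ((Fin.castSucc j : Fin (k+1)) : ℕ) from h), dif_pos h]
    rw [projL_apply]
    exact congrArg x (Fin.ext rfl)
  · rw [dif_neg (show ¬ 1 ≤ ((Fin.castSucc j : Fin (k+1)) : ℕ) from h), dif_neg h]

theorem projL_u (k : ℕ) (x : Fin (k + 1) → ℤ) :
    projL k ((phiUnit (k + 1) : Module.End ℤ (Fin (k+1) → ℤ)) x)
      = (phiUnit k : Module.End ℤ (Fin k → ℤ)) (projL k x) := by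
  rw [phiUnit_apply, map_add, projL_shift, phiUnit_apply]

theorem projL_uInv (k : ℕ) (x : Fin (k + 1) → ℤ) :
    projL k ((((phiUnit (k+1))⁻¹ : (Module.End ℤ (Fin (k+1) → ℤ))ˣ)
        : Module.End ℤ (Fin (k+1) → ℤ)) x)
      = (((phiUnit k)⁻¹ : (Module.End ℤ (Fin k → ℤ))ˣ) : Module.End ℤ (Fin k → ℤ))
        (projL k x) := by
  have h := projL_u k ((((phiUnit (k+1))⁻¹ : (Module.End ℤ (Fin (k+1) → ℤ))ˣ)
      : Module.End ℤ (Fin (k+1) → ℤ)) x)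
  rw [phiUnit_inv_cancel] at h
  rw [h, phiUnit_cancel_inv]

theorem projL_w (k : ℕ) (n : ℤ) (x : Fin (k + 1) → ℤ) :
    projL k (w (k + 1) n x) = w k n (projL k x) := by
  induction n using Int.induction_on with
  | zero => rw [w_zero, w_zero]
  | succ m ih => rw [w_add_one, w_add_one, projL_uInv, ih]
  | pred m ih =>
      rw [show (-(m:ℤ) - 1) = (-m - 1) from rfl, w_sub_one, w_sub_one, projL_u, ih]

/-- The projection as a monoid hom of multiplicative groups. -/
noncomputable def projM (k : ℕ) :
    Multiplicative (Fin (k + 1) → ℤ) →* Multiplicative (Fin k → ℤ) :=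
  AddMonoidHom.toMultiplicative (projL k).toAddMonoidHom

theorem projM_apply (k : ℕ) (x : Multiplicative (Fin (k + 1) → ℤ)) :
    projM k x = Multiplicative.ofAdd (projL k x.toAdd) := rfl

theorem proj_compat (k : ℕ) (g : Multiplicative ℤ) :
    (projM k).comp (act (k + 1) g).toMonoidHom
      = ((act k) ((MonoidHom.id (Multiplicative ℤ)) g)).toMonoidHom.comp (projM k) := by
  refine MonoidHom.ext fun x => ?_
  show projM k (act (k + 1) g x) = act k g (projM k x)
  rw [act_apply, act_apply, projM_apply, projM_apply]
  simp only [toAdd_ofAdd]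
  rw [projL_w]

/-- The quotient homomorphism `Γ_{k+1} → Γ_k`. -/
noncomputable def F (k : ℕ) : Gamma (k + 1) →* Gamma k :=
  SemidirectProduct.map (projM k) (MonoidHom.id _) (proj_compat k)




theorem aGen_zpow (d : ℕ) (i : Fin d) (m : ℤ) :
    aGen d i ^ m = SemidirectProduct.inl (Multiplicative.ofAdd (m • Pi.single i (1 : ℤ))) := by
  rw [aGen, ← MonoidHom.map_zpow, ← ofAdd_zsmul]

theorem shift_single_last (k : ℕ) :
    shiftMap (k + 1) (Pi.single (⟨k, by omega⟩ : Fin (k + 1)) (1 : ℤ)) = 0 := by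
  funext j
  rw [shiftMap_apply]
  by_cases h : 1 ≤ (j : ℕ)
  · rw [dif_pos h]
    have : (⟨(j : ℕ) - 1, by omega⟩ : Fin (k + 1)) ≠ ⟨k, by omega⟩ := by
      intro hc
      have := congrArg Fin.val hc
      simp only [Fin.val_mk] at this
      omega
    exact Pi.single_eq_of_ne this 1
  · rw [dif_neg h]; rfl

theorem aGen_last_central (k : ℕ) (m : ℤ) :
    aGen (k + 2) ⟨k + 1, by omega⟩ ^ m ∈ Subgroup.center (Gamma (k + 2)) := by
  rw [Subgroup.mem_center_iff]
  intro h
  rw [aGen_zpow]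
  have hfix : ∀ g : Multiplicative ℤ,
      act (k + 2) g (Multiplicative.ofAdd (m • Pi.single (⟨k + 1, by omega⟩ : Fin (k+2)) (1:ℤ)))
        = Multiplicative.ofAdd (m • Pi.single (⟨k + 1, by omega⟩ : Fin (k+2)) (1:ℤ)) := by
    intro g
    rw [act_apply]
    congr 1
    rw [toAdd_ofAdd]
    exact w_fixed (by rw [map_smul, shift_single_last (k+1), smul_zero]) _
  ext : 1
  · simp only [SemidirectProduct.mul_left, SemidirectProduct.left_inl,
      SemidirectProduct.right_inl, map_one, MulAut.one_apply, hfix]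
    exact mul_comm _ _
  · simp only [SemidirectProduct.mul_right, SemidirectProduct.right_inl, mul_one, one_mul]

theorem center_eq (k : ℕ) :
    Subgroup.center (Gamma (k + 2)) = Subgroup.zpowers (aGen (k + 2) ⟨k + 1, by omega⟩) := by
  apply le_antisymm
  · intro g hg
    rw [Subgroup.mem_center_iff] at hg
    set X := Multiplicative.toAdd g.left with hX
    -- from commuting with t : shiftMap X = 0
    have h1 := congrArg SemidirectProduct.left (hg (tGen (k + 2)))
    simp only [tGen, SemidirectProduct.mul_left, SemidirectProduct.left_inr,
      SemidirectProduct.right_inr, map_one, mul_one, one_mul] at h1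
    rw [act_apply, toAdd_ofAdd] at h1
    have h1' : w (k + 2) 1 X = X := by
      have := congrArg Multiplicative.toAdd h1
      rwa [toAdd_ofAdd] at this
    have hinv : (((phiUnit (k+2))⁻¹ : (Module.End ℤ (Fin (k+2) → ℤ))ˣ)
        : Module.End ℤ (Fin (k+2) → ℤ)) X = X := by
      rw [show (1 : ℤ) = 0 + 1 from rfl, w_add_one, w_zero] at h1'
      exact h1'
    have hu : (phiUnit (k + 2) : Module.End ℤ (Fin (k+2) → ℤ)) X = X := by
      conv_lhs => rw [← hinv]
      rw [phiUnit_inv_cancel]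
    have hNX : shiftMap (k + 2) X = 0 := by
      rw [phiUnit_apply] at hu
      exact add_eq_left.mp hu
    -- from commuting with a_1 : g.right = 1
    have h2 := congrArg SemidirectProduct.left (hg (aGen (k + 2) ⟨0, by omega⟩))
    simp only [aGen, SemidirectProduct.mul_left, SemidirectProduct.right_inl,
      SemidirectProduct.left_inl, map_one, MulAut.one_apply] at h2
    have h2' : act (k + 2) g.right (Multiplicative.ofAdd (Pi.single (⟨0, by omega⟩ : Fin (k+2)) (1:ℤ)))
        = Multiplicative.ofAdd (Pi.single (⟨0, by omega⟩ : Fin (k+2)) (1:ℤ)) := by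
      have := h2.symm.trans (mul_comm _ _)
      exact mul_left_cancel this
    have hw2 : w (k + 2) (Multiplicative.toAdd g.right)
        (Pi.single (⟨0, by omega⟩ : Fin (k+2)) (1:ℤ))
        = Pi.single (⟨0, by omega⟩ : Fin (k+2)) (1:ℤ) := by
      rw [act_apply, toAdd_ofAdd] at h2'
      have := congrArg Multiplicative.toAdd h2'
      rwa [toAdd_ofAdd, toAdd_ofAdd] at this
    have hn : Multiplicative.toAdd g.right = 0 := by
      have hev := congrFun hw2 ⟨1, by omega⟩
      rw [w_at_one (⟨0, by omega⟩ : Fin (k+2)) (⟨1, by omega⟩ : Fin (k+2)) rfl rfl] at hev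
      rw [Pi.single_eq_same] at hev
      have hne : (⟨1, by omega⟩ : Fin (k+2)) ≠ ⟨0, by omega⟩ := by
        intro hc; exact absurd (congrArg Fin.val hc) (by simp)
      rw [Pi.single_eq_of_ne hne] at hev
      omega
    have hright : g.right = 1 := by
      have : Multiplicative.toAdd g.right = Multiplicative.toAdd (1 : Multiplicative ℤ) := hn
      exact Multiplicative.toAdd.injective this
    -- conclude
    rw [Subgroup.mem_zpowers_iff]
    refine ⟨X ⟨k + 1, by omega⟩, ?_⟩
    rw [aGen_zpow]
    have hXeq : X = X ⟨k + 1, by omega⟩ • Pi.single (⟨k + 1, by omega⟩ : Fin (k+2)) (1:ℤ) := by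
      funext i
      by_cases hi : i = ⟨k + 1, by omega⟩
      · subst hi
        rw [Pi.smul_apply, Pi.single_eq_same, smul_eq_mul, mul_one]
      · have hlt : (i : ℕ) < k + 1 := by
          have hv : (i : ℕ) ≠ k + 1 := fun hc => hi (Fin.ext (by simp only [Fin.val_mk]; omega))
          have := i.isLt
          omega
        have hev := congrFun hNX ⟨(i : ℕ) + 1, by omega⟩
        rw [shiftMap_apply, dif_pos (by simp)] at hev
        have hidx : (⟨(i : ℕ) + 1 - 1, by omega⟩ : Fin (k+2)) = i := Fin.ext (by simp)
        rw [hidx] at hev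
        rw [Pi.smul_apply, Pi.single_eq_of_ne hi, smul_zero]
        exact hev
    ext : 1
    · show Multiplicative.ofAdd _ = g.left
      rw [← hXeq]
      rfl
    · show (1 : Multiplicative ℤ) = g.right
      exact hright.symm
  · intro g hg
    rw [Subgroup.mem_zpowers_iff] at hg
    obtain ⟨m, rfl⟩ := hg
    exact aGen_last_central k m





theorem F_aGen_last (k : ℕ) : F (k + 1) (aGen (k + 2) ⟨k + 1, by omega⟩) = 1 := by
  rw [aGen, F, SemidirectProduct.map_inl]
  have : projL (k + 1) (Pi.single (⟨k + 1, by omega⟩ : Fin (k + 2)) (1 : ℤ)) = 0 := by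
    funext j
    rw [projL_apply]
    refine Pi.single_eq_of_ne ?_ 1
    intro hc
    have := congrArg Fin.val hc
    simp only [Fin.coe_castSucc, Fin.val_mk] at this
    have := j.isLt
    omega
  rw [projM_apply, toAdd_ofAdd, this]
  exact map_one _

theorem ker_F (k : ℕ) :
    (F (k + 1)).ker = Subgroup.zpowers (aGen (k + 2) ⟨k + 1, by omega⟩) := by
  ext g
  rw [MonoidHom.mem_ker, Subgroup.mem_zpowers_iff]
  constructor
  · intro hF
    set X := Multiplicative.toAdd g.left with hX
    have hright : g.right = 1 := congrArg SemidirectProduct.right hF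
    have hleft : projL (k + 1) X = 0 := by
      have := congrArg SemidirectProduct.left hF
      rw [F, SemidirectProduct.map_left, projM_apply] at this
      have := congrArg Multiplicative.toAdd this
      rwa [toAdd_ofAdd] at this
    refine ⟨X ⟨k + 1, by omega⟩, ?_⟩
    rw [aGen_zpow]
    have hXeq : X = X ⟨k + 1, by omega⟩ • Pi.single (⟨k + 1, by omega⟩ : Fin (k+2)) (1:ℤ) := by
      funext i
      by_cases hi : i = ⟨k + 1, by omega⟩
      · subst hi
        rw [Pi.smul_apply, Pi.single_eq_same, smul_eq_mul, mul_one]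
      · have hlt : (i : ℕ) < k + 1 := by
          have hv : (i : ℕ) ≠ k + 1 := fun hc => hi (Fin.ext (by simp only [Fin.val_mk]; omega))
          have := i.isLt
          omega
        have hev := congrFun hleft ⟨(i : ℕ), hlt⟩
        rw [projL_apply] at hev
        have hidx : Fin.castSucc (⟨(i : ℕ), hlt⟩ : Fin (k + 1)) = i := Fin.ext rfl
        rw [hidx] at hev
        rw [Pi.smul_apply, Pi.single_eq_of_ne hi, smul_zero]
        exact hev
    ext : 1
    · show Multiplicative.ofAdd _ = g.left
      rw [← hXeq]
      rfl
    · show (1 : Multiplicative ℤ) = g.right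
      exact hright.symm
  · rintro ⟨m, rfl⟩
    rw [MonoidHom.map_zpow, F_aGen_last, one_zpow]

theorem F_surjective (k : ℕ) : Function.Surjective (F (k + 1)) := by
  intro g
  refine ⟨⟨Multiplicative.ofAdd (Fin.snoc (Multiplicative.toAdd g.left) 0), g.right⟩, ?_⟩
  ext : 1
  · show projM (k + 1) _ = g.left
    rw [projM_apply, toAdd_ofAdd]
    have : projL (k + 1) (Fin.snoc (Multiplicative.toAdd g.left) 0) =
        Multiplicative.toAdd g.left := by
      funext j
      rw [projL_apply]
      exact Fin.snoc_castSucc _ _ _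
    rw [this]
    rfl
  · rfl





theorem F_tGen (k : ℕ) : F (k + 1) (tGen (k + 2)) = tGen (k + 1) := by
  rw [tGen, F, SemidirectProduct.map_inr]
  rfl

theorem F_aGen (k : ℕ) (i : Fin (k + 1)) :
    F (k + 1) (aGen (k + 2) (Fin.castLE (by omega) i)) = aGen (k + 1) i := by
  rw [aGen, F, SemidirectProduct.map_inl, projM_apply, toAdd_ofAdd, aGen]
  have hp : projL (k + 1) (Pi.single (Fin.castLE (by omega : k + 1 ≤ k + 2) i) (1 : ℤ))
      = Pi.single i (1 : ℤ) := by
    funext j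
    rw [projL_apply]
    by_cases hj : j = i
    · subst hj
      have hcast : Fin.castSucc j = Fin.castLE (by omega : k + 1 ≤ k + 2) j := Fin.ext rfl
      rw [hcast, Pi.single_eq_same, Pi.single_eq_same]
    · rw [Pi.single_eq_of_ne hj, Pi.single_eq_of_ne]
      intro hc
      have hv := congrArg Fin.val hc
      simp only [Fin.coe_castSucc, Fin.coe_castLE] at hv
      exact hj (Fin.ext hv)
  exact congrArg SemidirectProduct.inl (congrArg Multiplicative.ofAdd hp)

theorem main_aux (k : ℕ) :
    Subgroup.center (Gamma (k + 2)) = Subgroup.zpowers (aGen (k + 2) ⟨k + 1, by omega⟩) ∧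
    (∀ n : ℤ, aGen (k + 2) ⟨k + 1, by omega⟩ ^ n = 1 → n = 0) ∧
    ∃ e : (Gamma (k + 2) ⧸ Subgroup.center (Gamma (k + 2))) ≃* Gamma (k + 1),
      e ((QuotientGroup.mk' _) (tGen (k + 2))) = tGen (k + 1) ∧
      ∀ i : Fin (k + 1),
        e ((QuotientGroup.mk' _) (aGen (k + 2) (Fin.castLE (by omega) i))) = aGen (k + 1) i := by
  have hcq : Subgroup.center (Gamma (k + 2)) = (F (k + 1)).ker :=
    (center_eq k).trans (ker_F k).symm
  refine ⟨center_eq k, ?_, ?_⟩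
  · intro n hn
    rw [aGen_zpow] at hn
    have h : (n • Pi.single (⟨k + 1, by omega⟩ : Fin (k + 2)) (1 : ℤ)) = (0 : Fin (k + 2) → ℤ) := by
      have h0 := congrArg (fun z : Gamma (k + 2) => Multiplicative.toAdd z.left) hn
      simpa [SemidirectProduct.left_inl] using h0
    have h2 := congrFun h ⟨k + 1, by omega⟩
    rw [Pi.smul_apply, Pi.single_eq_same, smul_eq_mul, mul_one] at h2
    simpa using h2
  · refine ⟨(QuotientGroup.quotientMulEquivOfEq hcq).trans
      (QuotientGroup.quotientKerEquivOfSurjective (F (k + 1)) (F_surjective k)), ?_, ?_⟩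
    · show (QuotientGroup.quotientKerEquivOfSurjective (F (k + 1)) (F_surjective k))
        ((QuotientGroup.quotientMulEquivOfEq hcq) (QuotientGroup.mk (tGen (k + 2))))
          = tGen (k + 1)
      rw [QuotientGroup.quotientMulEquivOfEq_mk]
      show F (k + 1) (tGen (k + 2)) = tGen (k + 1)
      exact F_tGen k
    · intro i
      show (QuotientGroup.quotientKerEquivOfSurjective (F (k + 1)) (F_surjective k))
        ((QuotientGroup.quotientMulEquivOfEq hcq)
          (QuotientGroup.mk (aGen (k + 2) (Fin.castLE (by omega) i)))) = aGen (k + 1) i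
      rw [QuotientGroup.quotientMulEquivOfEq_mk]
      show F (k + 1) (aGen (k + 2) (Fin.castLE (by omega) i)) = aGen (k + 1) i
      exact F_aGen k i


/-- For `d ≥ 2`: the center of `Γ_d` is the infinite cyclic subgroup `⟨a_d⟩`, and
`Γ_d / ⟨a_d⟩ ≅ Γ_{d-1}` via an isomorphism sending the images of `t` and `a_i` (`i ≤ d-1`) to
the generators `t` and `a_i` of `Γ_{d-1}`. -/
theorem center_and_quotient (d : ℕ) (hd : 2 ≤ d) :
    Subgroup.center (Gamma d) = Subgroup.zpowers (aGen d ⟨d - 1, by omega⟩) ∧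
    (∀ n : ℤ, aGen d ⟨d - 1, by omega⟩ ^ n = 1 → n = 0) ∧
    ∃ e : (Gamma d ⧸ Subgroup.center (Gamma d)) ≃* Gamma (d - 1),
      e ((QuotientGroup.mk' _) (tGen d)) = tGen (d - 1) ∧
      ∀ i : Fin (d - 1),
        e ((QuotientGroup.mk' _) (aGen d (Fin.castLE (by omega) i))) = aGen (d - 1) i := by
  obtain ⟨k, rfl⟩ : ∃ k, d = k + 2 := ⟨d - 2, by omega⟩
  exact main_aux k

end ModelFiliform
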